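/- Let n ≥ 1, f₁, f₂ ∈ 𝒮(ℝⁿ×ℝⁿ; ℂ), and ℏ ≠ 0. Then for every φ ∈ 𝒮(ℝⁿ; ℂ), the composition of the operators satisfies ρ_ℏ(f̂₁)(ρ_ℏ(f̂₂)φ) = ρ_ℏ(f̂₁ ∗_H f̂₂)φ, where the twisted convolution is defined by (f̂₁ ∗_H f̂₂)(x, y) = (2π)^{−n} ∫_{ℝⁿ} f̂₁(x, z) f̂₂(x + ℏz, y − z) dz. -/

import Mathlib

open MeasureTheory RealInnerProductSpace

/-- Fourier transform in the second variable:
`f̂(x,y) = ∫ f(x,ξ) e^{−i⟨y,ξ⟩} dξ`. -/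
noncomputable def fhat {n : ℕ}
    (f : EuclideanSpace ℝ (Fin n) × EuclideanSpace ℝ (Fin n) → ℂ)
    (x y : EuclideanSpace ℝ (Fin n)) : ℂ :=
  ∫ ξ : EuclideanSpace ℝ (Fin n),
    f (x, ξ) * Complex.exp (-(Complex.I * ((⟪y, ξ⟫ : ℝ) : ℂ)))

/-- The operator `ρ_ℏ(F)`: `(ρ_ℏ(F)φ)(x) = (2π)^{−n} ∫ F(x,y) φ(x + ℏy) dy`. -/
noncomputable def rho {n : ℕ} (ℏ : ℝ)
    (F : EuclideanSpace ℝ (Fin n) → EuclideanSpace ℝ (Fin n) → ℂ)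
    (φ : EuclideanSpace ℝ (Fin n) → ℂ) (x : EuclideanSpace ℝ (Fin n)) : ℂ :=
  (((2 * Real.pi) ^ n : ℝ) : ℂ)⁻¹ * ∫ y : EuclideanSpace ℝ (Fin n), F x y * φ (x + ℏ • y)

/-- The twisted (Heisenberg) convolution
`(F ∗_H G)(x,y) = (2π)^{−n} ∫ F(x,z) G(x + ℏz, y − z) dz`. -/
noncomputable def convH {n : ℕ} (ℏ : ℝ)
    (F G : EuclideanSpace ℝ (Fin n) → EuclideanSpace ℝ (Fin n) → ℂ)
    (x y : EuclideanSpace ℝ (Fin n)) : ℂ :=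
  (((2 * Real.pi) ^ n : ℝ) : ℂ)⁻¹ *
    ∫ z : EuclideanSpace ℝ (Fin n), F x z * G (x + ℏ • z) (y - z)

/-!
Unfolding both sides, the identity is Fubini's theorem for
`(y, w) ↦ f̂₁(x, y) f̂₂(x + ℏy, w − y) φ(x + ℏw)`, after the substitution `w = y + z` in the inner
integral of the left-hand side. This function is integrable on `ℝⁿ × ℝⁿ`: `f̂₁(x, ·)` is, up to
scaling, the Fourier transform of the Schwartz slice `f₁(x, ·)`; `f̂₂` is bounded, since the
slices of a Schwartz function have uniformly bounded `L¹` norms; and `φ(x + ℏ ·)` is integrable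
because `ℏ ≠ 0`.
-/

open scoped SchwartzMap FourierTransform

namespace SchwartzMap

variable {E F V : Type*} [NormedAddCommGroup E] [NormedAddCommGroup F] [NormedAddCommGroup V]

lemma antilipschitzWith_prodMk_left (x : E) : AntilipschitzWith 1 (fun ξ : F => (x, ξ)) :=
  AntilipschitzWith.of_le_mul_dist fun ξ ξ' => by simp [Prod.dist_eq]

variable [NormedSpace ℝ E] [NormedSpace ℝ F] [NormedSpace ℝ V]

lemma hasTemperateGrowth_prodMk_left (x : E) :
    Function.HasTemperateGrowth (fun ξ : F => (x, ξ)) := by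
  convert (Function.HasTemperateGrowth.const ((x, 0) : E × F)).add
    (ContinuousLinearMap.inr ℝ E F).hasTemperateGrowth using 1
  ext ξ <;> simp

noncomputable def sliceSnd (f : 𝓢(E × F, V)) (x : E) : 𝓢(F, V) :=
  compCLMOfAntilipschitz ℝ (hasTemperateGrowth_prodMk_left x)
    (antilipschitzWith_prodMk_left x) f

lemma exists_integral_norm_slice_le [MeasurableSpace F] [BorelSpace F]
    [SecondCountableTopology F] (μ : Measure F) [μ.HasTemperateGrowth] (f : 𝓢(E × F, V)) :
    ∃ B : ℝ, ∀ x : E, ∫ ξ, ‖f (x, ξ)‖ ∂μ ≤ B := by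
  set l := μ.integrablePower
  refine ⟨2 ^ l * (∫ ξ, (1 + ‖ξ‖) ^ (-(l : ℝ)) ∂μ) *
    (SchwartzMap.seminorm ℝ 0 0 f + SchwartzMap.seminorm ℝ l 0 f), fun x => ?_⟩
  have hdecay (ξ : F) : ‖ξ‖ ^ (0 + l) * ‖f (x, ξ)‖ ≤ SchwartzMap.seminorm ℝ l 0 f := by
    rw [zero_add]
    refine le_trans ?_ (norm_pow_mul_le_seminorm ℝ f l (x, ξ))
    gcongr
    exact norm_snd_le (x, ξ)
  simpa using integral_pow_mul_le_of_le_of_pow_mul_le (k := 0) (μ := μ)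
    (fun ξ => norm_le_seminorm ℝ f (x, ξ)) hdecay

end SchwartzMap

section Fhat

variable {n : ℕ}

local notation "E" => EuclideanSpace ℝ (Fin n)

lemma fhat_eq_fourier (f : E × E → ℂ) (x y : E) :
    fhat f x y = 𝓕 (fun ξ : E => f (x, ξ)) ((2 * Real.pi)⁻¹ • y) := by
  rw [Real.fourier_eq']
  refine integral_congr_ae (Filter.Eventually.of_forall fun ξ => ?_)
  have harg : -2 * Real.pi * ⟪ξ, (2 * Real.pi)⁻¹ • y⟫ = -⟪y, ξ⟫ := by
    rw [real_inner_smul_right, real_inner_comm]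
    field_simp [Real.pi_ne_zero]
  simp only [smul_eq_mul, harg]
  push_cast
  ring_nf

lemma integrable_fhat (f : 𝓢(E × E, ℂ)) (x : E) : Integrable (fhat ⇑f x) := by
  have h := (𝓕 (SchwartzMap.sliceSnd f x)).integrable (μ := volume)
  rw [SchwartzMap.fourier_coe] at h
  convert h.comp_smul (inv_ne_zero (by positivity : 2 * Real.pi ≠ 0)) using 1
  funext y
  exact fhat_eq_fourier _ x y

lemma exists_norm_fhat_le (f : 𝓢(E × E, ℂ)) : ∃ B : ℝ, ∀ x y : E, ‖fhat ⇑f x y‖ ≤ B := by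
  obtain ⟨B, hB⟩ := SchwartzMap.exists_integral_norm_slice_le volume f
  refine ⟨B, fun x y => (norm_integral_le_integral_norm _).trans ?_⟩
  simpa [Complex.norm_exp] using hB x

lemma stronglyMeasurable_fhat (f : 𝓢(E × E, ℂ)) :
    StronglyMeasurable (Function.uncurry (fhat ⇑f)) :=
  StronglyMeasurable.integral_prod_right (f := fun (p : E × E) (ξ : E) =>
    f (p.1, ξ) * Complex.exp (-(Complex.I * ((⟪p.2, ξ⟫ : ℝ) : ℂ))))
    (by fun_prop : Continuous _).stronglyMeasurable

end Fhat

section Composition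

variable {n : ℕ}

local notation "E" => EuclideanSpace ℝ (Fin n)

lemma integrable_rho_rho_integrand {F G : E → E → ℂ} {φ : E → ℂ} {ℏ : ℝ} (hℏ : ℏ ≠ 0) (x : E)
    (hF : Integrable (F x)) (hG : StronglyMeasurable (Function.uncurry G)) {B : ℝ}
    (hGB : ∀ a b, ‖G a b‖ ≤ B) (hφ : Integrable φ) :
    Integrable (fun q : E × E => F x q.1 * G (x + ℏ • q.1) (q.2 - q.1) * φ (x + ℏ • q.2))
      (volume.prod volume) := by
  have hφx : Integrable (fun w : E => φ (x + ℏ • w)) := (hφ.comp_add_left x).comp_smul hℏ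
  refine (hF.norm.mul_prod (hφx.norm.const_mul B)).mono' ?_ ?_
  · have hGq : AEStronglyMeasurable (fun q : E × E => G (x + ℏ • q.1) (q.2 - q.1))
        (volume.prod volume) :=
      (hG.comp_measurable (by fun_prop :
        Measurable fun q : E × E => (x + ℏ • q.1, q.2 - q.1))).aestronglyMeasurable
    exact (hF.aestronglyMeasurable.comp_fst.mul hGq).mul hφx.aestronglyMeasurable.comp_snd
  · refine Filter.Eventually.of_forall fun q => ?_
    simp only [norm_mul, mul_assoc]
    gcongr
    exact hGB _ _

lemma rho_rho_eq_rho_convH {F G : E → E → ℂ} {φ : E → ℂ} {ℏ : ℝ} {x : E}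
    (h : Integrable (fun q : E × E => F x q.1 * G (x + ℏ • q.1) (q.2 - q.1) * φ (x + ℏ • q.2))
      (volume.prod volume)) :
    rho ℏ F (rho ℏ G φ) x = rho ℏ (convH ℏ F G) φ x := by
  set c : ℂ := (((2 * Real.pi) ^ n : ℝ) : ℂ)⁻¹
  have inner (y : E) : F x y * rho ℏ G φ (x + ℏ • y)
      = c * ∫ w, F x y * G (x + ℏ • y) (w - y) * φ (x + ℏ • w) := by
    rw [rho, ← integral_sub_right_eq_self _ y, mul_left_comm, ← integral_const_mul]
    congr 2 with w
    rw [smul_sub, add_add_sub_cancel, mul_assoc]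
  have outer (w : E) : convH ℏ F G x w * φ (x + ℏ • w)
      = c * ∫ y, F x y * G (x + ℏ • y) (w - y) * φ (x + ℏ • w) := by
    rw [convH, mul_assoc, integral_mul_const]
  calc rho ℏ F (rho ℏ G φ) x
      = c * ∫ y, F x y * rho ℏ G φ (x + ℏ • y) := rfl
    _ = c * (c * ∫ y, ∫ w, F x y * G (x + ℏ • y) (w - y) * φ (x + ℏ • w)) := by
        simp only [inner, integral_const_mul]
    _ = c * (c * ∫ w, ∫ y, F x y * G (x + ℏ • y) (w - y) * φ (x + ℏ • w)) := by
        rw [integral_integral_swap h]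
    _ = c * ∫ w, convH ℏ F G x w * φ (x + ℏ • w) := by
        simp only [outer, integral_const_mul]
    _ = rho ℏ (convH ℏ F G) φ x := rfl

end Composition

theorem statement6_general (n : ℕ)
    (f₁ f₂ : SchwartzMap (EuclideanSpace ℝ (Fin n) × EuclideanSpace ℝ (Fin n)) ℂ)
    (ℏ : ℝ) (hℏ : ℏ ≠ 0) (φ : SchwartzMap (EuclideanSpace ℝ (Fin n)) ℂ) :
    ∀ x : EuclideanSpace ℝ (Fin n),
      rho ℏ (fhat ⇑f₁) (rho ℏ (fhat ⇑f₂) ⇑φ) x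
        = rho ℏ (convH ℏ (fhat ⇑f₁) (fhat ⇑f₂)) ⇑φ x := by
  intro x
  obtain ⟨B, hB⟩ := exists_norm_fhat_le f₂
  exact rho_rho_eq_rho_convH <| integrable_rho_rho_integrand hℏ x (integrable_fhat f₁ x)
    (stronglyMeasurable_fhat f₂) hB φ.integrable

/-- For Schwartz `f₁, f₂` on `ℝⁿ×ℝⁿ` and `ℏ ≠ 0`, for every Schwartz `φ`
the composition satisfies `ρ_ℏ(f̂₁)(ρ_ℏ(f̂₂)φ) = ρ_ℏ(f̂₁ ∗_H f̂₂)φ`. -/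
theorem statement6 (n : ℕ) (hn : 1 ≤ n)
    (f₁ f₂ : SchwartzMap (EuclideanSpace ℝ (Fin n) × EuclideanSpace ℝ (Fin n)) ℂ)
    (ℏ : ℝ) (hℏ : ℏ ≠ 0) (φ : SchwartzMap (EuclideanSpace ℝ (Fin n)) ℂ) :
    ∀ x : EuclideanSpace ℝ (Fin n),
      rho ℏ (fhat ⇑f₁) (rho ℏ (fhat ⇑f₂) ⇑φ) x
        = rho ℏ (convH ℏ (fhat ⇑f₁) (fhat ⇑f₂)) ⇑φ x :=
  statement6_general n f₁ f₂ ℏ hℏ φ
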